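/- arXiv:1901.00189 — 4 statements merged into one kernel-verified Lean document; each statement's English description precedes it below -/
import Mathlib

section
/- Let {p_t}_{t>0} and {q_t}_{t>0} be two Markovian semigroups on a locally compact space K with the same regular Dirichlet form, such that p_t f = q_t f holds μ-a.e. for every t > 0 and bounded continuous f, each q_t f is continuous on K, and p_t has an absolutely continuous transition kernel p_t(x,dy) = p_t(x,y)dμ(y). Then p_t f(x) = q_t f(x) for every x ∈ K, t > 0, and every bounded Borel f; in particular p_t is strong Feller. -/
/-!
For a bounded continuous `g` and `s, ε > 0`, compute `p_{s+ε} g (x)` in two ways. Writing it as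
`p_ε (p_s g) (x)`, absolute continuity of `p_ε(x, ·)` lets us replace `p_s g` by the continuous
`q_s g`, so it tends to `q_s g (x)` as `ε → 0`. Writing it as `p_s (p_ε g) (x)`, dominated
convergence gives the limit `p_s g (x)`. Hence `p_s g = q_s g` everywhere for bounded continuous
`g`, so the finite measures `p_s(x, ·)` and `q_s(x, ·)` coincide, and the strong Feller property
of `q_s` passes to `p_s`.
-/

open MeasureTheory Filter Set
open scoped Topology

section

variable {α : Type*} [MeasurableSpace α]

lemma isFiniteMeasure_of_measure_univ_le_one {ν : Measure α} (hν : ν univ ≤ 1) :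
    IsFiniteMeasure ν :=
  ⟨hν.trans_lt ENNReal.one_lt_top⟩

lemma abs_integral_le_of_measure_univ_le_one {ν : Measure α} (hν : ν univ ≤ 1) {g : α → ℝ}
    {M : ℝ} (hM : 0 ≤ M) (hg : ∀ y, |g y| ≤ M) : |∫ y, g y ∂ν| ≤ M := by
  have := isFiniteMeasure_of_measure_univ_le_one hν
  have hν_real : ν.real univ ≤ 1 := ENNReal.toReal_le_of_le_ofReal zero_le_one (by simpa)
  calc |∫ y, g y ∂ν| ≤ M * ν.real univ := by
        simpa only [Real.norm_eq_abs] using norm_integral_le_of_norm_le_const (μ := ν)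
          (.of_forall fun y => (Real.norm_eq_abs (g y)).trans_le (hg y))
    _ ≤ M := mul_le_of_le_one_right hM hν_real

def IsSubMarkovian (κ : ℝ → α → Measure α) : Prop :=
  ∀ t : ℝ, 0 < t → ∀ x, κ t x univ ≤ 1

def IsAbsolutelyContinuousKernel (μ : Measure α) (κ : ℝ → α → Measure α) : Prop :=
  ∀ t : ℝ, 0 < t → ∀ x, κ t x ≪ μ

def HasSemigroupProperty (κ : ℝ → α → Measure α) : Prop :=
  ∀ t ε : ℝ, 0 < t → 0 < ε → ∀ f : α → ℝ, Measurable f → (∃ M, ∀ x, |f x| ≤ M) → ∀ x,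
    ∫ y, f y ∂(κ (t + ε) x) = ∫ y, (∫ z, f z ∂(κ t y)) ∂(κ ε x)

variable [TopologicalSpace α]

def IsStrongFeller (κ : ℝ → α → Measure α) : Prop :=
  ∀ t : ℝ, 0 < t → ∀ f : α → ℝ, Measurable f → (∃ M, ∀ x, |f x| ≤ M) →
    Continuous fun x => ∫ y, f y ∂(κ t x)

def TendstoSelfAtZero (κ : ℝ → α → Measure α) : Prop :=
  ∀ f : α → ℝ, Continuous f → (∃ M, ∀ x, |f x| ≤ M) → ∀ x,
    Tendsto (fun ε => ∫ y, f y ∂(κ ε x)) (𝓝[>] 0) (𝓝 (f x))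

def AEEqOnBoundedContinuous (μ : Measure α) (κ η : ℝ → α → Measure α) : Prop :=
  ∀ t : ℝ, 0 < t → ∀ f : α → ℝ, Continuous f → (∃ M, ∀ x, |f x| ≤ M) →
    (fun x => ∫ y, f y ∂(κ t x)) =ᵐ[μ] fun x => ∫ y, f y ∂(η t x)

variable [OpensMeasurableSpace α] {μ : Measure α} {κ η : ℝ → α → Measure α}

lemma integral_kernel_add_eq_integral_of_aeEq (hae : AEEqOnBoundedContinuous μ κ η)
    (hac : IsAbsolutelyContinuousKernel μ κ) (hsg : HasSemigroupProperty κ)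
    {s ε : ℝ} (hs : 0 < s) (hε : 0 < ε) {g : α → ℝ} (hg : Continuous g)
    (hgb : ∃ M, ∀ x, |g x| ≤ M) (x : α) :
    ∫ y, g y ∂(κ (s + ε) x) = ∫ y, (∫ z, g z ∂(η s y)) ∂(κ ε x) := by
  rw [hsg s ε hs hε g hg.measurable hgb x]
  exact integral_congr_ae ((hae s hs g hg hgb).filter_mono (hac ε hε x).ae_le)

lemma tendsto_integral_kernel_add_nhdsGT_of_aeEq (hηsub : IsSubMarkovian η)
    (hae : AEEqOnBoundedContinuous μ κ η) (hηSF : IsStrongFeller η)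
    (hac : IsAbsolutelyContinuousKernel μ κ) (hsg : HasSemigroupProperty κ)
    (hpt : TendstoSelfAtZero κ)
    {s : ℝ} (hs : 0 < s) {g : α → ℝ} (hg : Continuous g) (hgb : ∃ M, ∀ x, |g x| ≤ M) (x : α) :
    Tendsto (fun ε => ∫ y, g y ∂(κ (s + ε) x)) (𝓝[>] 0) (𝓝 (∫ y, g y ∂(η s x))) := by
  obtain ⟨M, hM⟩ := hgb
  have hηg_bdd : ∀ y, |∫ z, g z ∂(η s y)| ≤ M := fun y =>
    abs_integral_le_of_measure_univ_le_one (hηsub s hs y) ((abs_nonneg _).trans (hM x)) hM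
  refine (hpt _ (hηSF s hs g hg.measurable ⟨M, hM⟩) ⟨M, hηg_bdd⟩ x).congr' ?_
  filter_upwards [self_mem_nhdsWithin] with ε hε
  exact (integral_kernel_add_eq_integral_of_aeEq hae hac hsg hs hε hg ⟨M, hM⟩ x).symm

lemma tendsto_integral_kernel_add_nhdsGT_self (hκsub : IsSubMarkovian κ)
    (hae : AEEqOnBoundedContinuous μ κ η) (hηSF : IsStrongFeller η)
    (hac : IsAbsolutelyContinuousKernel μ κ) (hsg : HasSemigroupProperty κ)
    (hpt : TendstoSelfAtZero κ)
    {s : ℝ} (hs : 0 < s) {g : α → ℝ} (hg : Continuous g) (hgb : ∃ M, ∀ x, |g x| ≤ M) (x : α) :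
    Tendsto (fun ε => ∫ y, g y ∂(κ (s + ε) x)) (𝓝[>] 0) (𝓝 (∫ y, g y ∂(κ s x))) := by
  have := isFiniteMeasure_of_measure_univ_le_one (hκsub s hs x)
  obtain ⟨M, hM⟩ := hgb
  have hM0 : 0 ≤ M := (abs_nonneg _).trans (hM x)
  have hpos : ∀ᶠ ε in 𝓝[>] (0 : ℝ), 0 < ε := self_mem_nhdsWithin
  have hsplit : ∀ᶠ ε in 𝓝[>] (0 : ℝ),
      ∫ y, (∫ z, g z ∂(κ ε y)) ∂(κ s x) = ∫ y, g y ∂(κ (s + ε) x) := by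
    filter_upwards [hpos] with ε hε
    rw [add_comm s ε, hsg ε s hε hs g hg.measurable ⟨M, hM⟩ x]
  -- `y ↦ ∫ g ∂(κ ε y)` is measurable only up to a `κ s x`-null set, through `η ε`.
  have hmeas : ∀ᶠ ε in 𝓝[>] (0 : ℝ),
      AEStronglyMeasurable (fun y => ∫ z, g z ∂(κ ε y)) (κ s x) := by
    filter_upwards [hpos] with ε hε
    exact (hηSF ε hε g hg.measurable ⟨M, hM⟩).aestronglyMeasurable.congr
      ((hae ε hε g hg ⟨M, hM⟩).filter_mono (hac s hs x).ae_le).symm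
  have hbound : ∀ᶠ ε in 𝓝[>] (0 : ℝ), ∀ᵐ y ∂(κ s x), ‖∫ z, g z ∂(κ ε y)‖ ≤ M := by
    filter_upwards [hpos] with ε hε
    exact .of_forall fun y => (Real.norm_eq_abs _).trans_le
      (abs_integral_le_of_measure_univ_le_one (hκsub ε hε y) hM0 hM)
  exact (tendsto_integral_filter_of_dominated_convergence (fun _ => M) hmeas hbound
    (integrable_const M) (.of_forall (hpt g hg ⟨M, hM⟩))).congr' hsplit

lemma integral_kernel_eq_of_continuous (hκsub : IsSubMarkovian κ) (hηsub : IsSubMarkovian η)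
    (hae : AEEqOnBoundedContinuous μ κ η) (hηSF : IsStrongFeller η)
    (hac : IsAbsolutelyContinuousKernel μ κ) (hsg : HasSemigroupProperty κ)
    (hpt : TendstoSelfAtZero κ)
    {s : ℝ} (hs : 0 < s) {g : α → ℝ} (hg : Continuous g) (hgb : ∃ M, ∀ x, |g x| ≤ M) (x : α) :
    ∫ y, g y ∂(κ s x) = ∫ y, g y ∂(η s x) :=
  tendsto_nhds_unique
    (tendsto_integral_kernel_add_nhdsGT_self hκsub hae hηSF hac hsg hpt hs hg hgb x)
    (tendsto_integral_kernel_add_nhdsGT_of_aeEq hηsub hae hηSF hac hsg hpt hs hg hgb x)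

lemma kernel_eq_of_aeEq_of_isStrongFeller [HasOuterApproxClosed α] [BorelSpace α]
    (hκsub : IsSubMarkovian κ) (hηsub : IsSubMarkovian η)
    (hae : AEEqOnBoundedContinuous μ κ η) (hηSF : IsStrongFeller η)
    (hac : IsAbsolutelyContinuousKernel μ κ) (hsg : HasSemigroupProperty κ)
    (hpt : TendstoSelfAtZero κ) {s : ℝ} (hs : 0 < s) (x : α) :
    κ s x = η s x := by
  have := isFiniteMeasure_of_measure_univ_le_one (hκsub s hs x)
  have := isFiniteMeasure_of_measure_univ_le_one (hηsub s hs x)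
  exact ext_of_forall_integral_eq_of_IsFiniteMeasure fun f =>
    integral_kernel_eq_of_continuous hκsub hηsub hae hηSF hac hsg hpt hs f.continuous
      ⟨‖f‖, fun y => (Real.norm_eq_abs (f y)).symm.trans_le (f.norm_coe_le_norm y)⟩ x

end

theorem stmt_8_general {K : Type*} [MetricSpace K] [MeasurableSpace K] [BorelSpace K]
    (μ : Measure K)
    (κ η : ℝ → K → Measure K)
    (hκsub : ∀ t : ℝ, 0 < t → ∀ x, κ t x Set.univ ≤ 1)
    (hηsub : ∀ t : ℝ, 0 < t → ∀ x, η t x Set.univ ≤ 1)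
    -- a.e. agreement on bounded continuous functions
    (hae : ∀ t : ℝ, 0 < t → ∀ f : K → ℝ, Continuous f → (∃ M, ∀ x, |f x| ≤ M) →
      (fun x => ∫ y, f y ∂(κ t x)) =ᵐ[μ] fun x => ∫ y, f y ∂(η t x))
    -- η is strong Feller
    (hηSF : ∀ t : ℝ, 0 < t → ∀ f : K → ℝ, Measurable f → (∃ M, ∀ x, |f x| ≤ M) →
      Continuous fun x => ∫ y, f y ∂(η t x))
    -- absolute continuity of the transition kernel of κ
    (hac : ∀ t : ℝ, 0 < t → ∀ x, κ t x ≪ μ)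
    -- semigroup property of κ: p_{t+ε} f (x) = p_ε (p_t f) (x) for all x
    (hsg : ∀ t ε : ℝ, 0 < t → 0 < ε → ∀ f : K → ℝ, Measurable f →
      (∃ M, ∀ x, |f x| ≤ M) → ∀ x,
      ∫ y, f y ∂(κ (t + ε) x) = ∫ y, (∫ z, f z ∂(κ t y)) ∂(κ ε x))
    -- pointwise small-time continuity at bounded continuous functions
    (hpt : ∀ f : K → ℝ, Continuous f → (∃ M, ∀ x, |f x| ≤ M) → ∀ x,
      Tendsto (fun ε => ∫ y, f y ∂(κ ε x))
        (nhdsWithin (0 : ℝ) (Set.Ioi (0 : ℝ))) (nhds (f x))) :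
    ∀ t : ℝ, 0 < t → ∀ f : K → ℝ, Measurable f → (∃ M, ∀ x, |f x| ≤ M) →
      (∀ x, ∫ y, f y ∂(κ t x) = ∫ y, f y ∂(η t x)) ∧
      Continuous fun x => ∫ y, f y ∂(κ t x) := by
  intro t ht f hf hfb
  have hκη : κ t = η t :=
    funext (kernel_eq_of_aeEq_of_isStrongFeller hκsub hηsub hae hηSF hac hsg hpt ht)
  exact ⟨fun x => by rw [hκη], hκη ▸ hηSF t ht f hf hfb⟩

/-- Two sub-Markovian semigroups (given by kernels `κ`, `η`) associated with the same
Dirichlet form, agreeing `μ`-a.e. on bounded continuous functions, with `η` strong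
Feller and `κ` having an absolutely continuous kernel, agree everywhere on bounded
Borel functions; in particular `κ` is strong Feller. -/
theorem stmt_8 {K : Type*} [MetricSpace K] [MeasurableSpace K] [BorelSpace K]
    [LocallyCompactSpace K] [SecondCountableTopology K]
    (μ : Measure K)
    (κ η : ℝ → K → Measure K)
    (hκsub : ∀ t : ℝ, 0 < t → ∀ x, κ t x Set.univ ≤ 1)
    (hηsub : ∀ t : ℝ, 0 < t → ∀ x, η t x Set.univ ≤ 1)
    -- a.e. agreement on bounded continuous functions
    (hae : ∀ t : ℝ, 0 < t → ∀ f : K → ℝ, Continuous f → (∃ M, ∀ x, |f x| ≤ M) →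
      (fun x => ∫ y, f y ∂(κ t x)) =ᵐ[μ] fun x => ∫ y, f y ∂(η t x))
    -- η is strong Feller
    (hηSF : ∀ t : ℝ, 0 < t → ∀ f : K → ℝ, Measurable f → (∃ M, ∀ x, |f x| ≤ M) →
      Continuous fun x => ∫ y, f y ∂(η t x))
    -- absolute continuity of the transition kernel of κ
    (hac : ∀ t : ℝ, 0 < t → ∀ x, κ t x ≪ μ)
    -- semigroup property of κ: p_{t+ε} f (x) = p_ε (p_t f) (x) for all x
    (hsg : ∀ t ε : ℝ, 0 < t → 0 < ε → ∀ f : K → ℝ, Measurable f →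
      (∃ M, ∀ x, |f x| ≤ M) → ∀ x,
      ∫ y, f y ∂(κ (t + ε) x) = ∫ y, (∫ z, f z ∂(κ t y)) ∂(κ ε x))
    -- pointwise small-time continuity at bounded continuous functions
    (hpt : ∀ f : K → ℝ, Continuous f → (∃ M, ∀ x, |f x| ≤ M) → ∀ x,
      Tendsto (fun ε => ∫ y, f y ∂(κ ε x))
        (nhdsWithin (0 : ℝ) (Set.Ioi (0 : ℝ))) (nhds (f x))) :
    ∀ t : ℝ, 0 < t → ∀ f : K → ℝ, Measurable f → (∃ M, ∀ x, |f x| ≤ M) →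
      (∀ x, ∫ y, f y ∂(κ t x) = ∫ y, f y ∂(η t x)) ∧
      Continuous fun x => ∫ y, f y ∂(κ t x) :=
  stmt_8_general μ κ η hκsub hηsub hae hηSF hac hsg hpt
end

section
/- Let K be an arcwise connected topological space, μ a Borel measure on K, and p_t(x,y) a continuous nonnegative kernel on (0,∞)×K×K satisfying Chapman–Kolmogorov with respect to μ and p_t(x,x) > 0 for all t,x. Then for every x, y ∈ K there exists N ∈ ℕ with p_N(x,y) > 0. (Proof via covering a path from x to y by finitely many open sets on each of which p_1 is positive.) -/
open MeasureTheory Set Filter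

private lemma stmt9_preconn_subset {S P : Set ℝ} (hS : IsPreconnected S) (hP : IsOpen P)
    (hne : (S ∩ P).Nonempty) (hcl : ∀ a ∈ S, a ∈ closure (S ∩ P) → a ∈ P) : S ⊆ P := by
  intro b hb
  by_contra hbP
  have hsub : S ⊆ P ∪ (closure (S ∩ P))ᶜ := by
    intro a ha
    by_cases h : a ∈ closure (S ∩ P)
    · exact Or.inl (hcl a ha h)
    · exact Or.inr h
  obtain ⟨c, hcS, hcP, hcC⟩ := hS P (closure (S ∩ P))ᶜ hP isClosed_closure.isOpen_compl
    hsub hne ⟨b, hb, fun h => hbP (hcl b hb h)⟩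
  exact hcC (subset_closure ⟨hcS, hcP⟩)

/-- On an arcwise connected space, a continuous nonnegative Chapman–Kolmogorov
kernel which is positive on the diagonal connects any two points in finite time:
there is `N ∈ ℕ` with `p_N(x,y) > 0`. -/
theorem stmt_9 {K : Type*} [TopologicalSpace K] [MeasurableSpace K]
    [PathConnectedSpace K]
    (μ : Measure K) (p : ℝ → K → K → ℝ)
    (hcont : ContinuousOn (fun q : ℝ × K × K => p q.1 q.2.1 q.2.2) {q | 0 < q.1})
    (hCK : ∀ (s t : ℝ), 0 < s → 0 < t → ∀ x y : K,
      p (t + s) x y = ∫ z, p t x z * p s z y ∂μ)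
    (hnonneg : ∀ t : ℝ, 0 < t → ∀ x y : K, 0 ≤ p t x y)
    (hdiag : ∀ t : ℝ, 0 < t → ∀ x : K, 0 < p t x x)
    (hfull : ∀ x : K, ∀ U ∈ nhds x, 0 < μ U)
    (x y : K) :
    ∃ N : ℕ, 0 < N ∧ 0 < p (N : ℝ) x y := by
  classical
  have hopen : IsOpen {q : ℝ × K × K | 0 < q.1} :=
    isOpen_lt continuous_const continuous_fst
  have hca : ∀ (t : ℝ) (a b : K), 0 < t →
      ContinuousAt (fun q : ℝ × K × K => p q.1 q.2.1 q.2.2) (t, a, b) :=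
    fun t a b ht => hcont.continuousAt (hopen.mem_nhds ht)
  -- continuity in the second space variable
  have cu : ∀ (t : ℝ), 0 < t → ∀ a : K, Continuous fun u : K => p t a u := by
    intro t ht a
    rw [continuous_iff_continuousAt]
    intro u
    have h1 : ContinuousAt (fun u : K => ((t, a, u) : ℝ × K × K)) u :=
      (continuous_const.prodMk (continuous_const.prodMk continuous_id)).continuousAt
    have h2 := ContinuousAt.comp (f := fun u : K => ((t, a, u) : ℝ × K × K)) (hca t a u ht) h1
    exact h2
  -- continuity in the first space variable
  have cv : ∀ (t : ℝ), 0 < t → ∀ b : K, Continuous fun u : K => p t u b := by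
    intro t ht b
    rw [continuous_iff_continuousAt]
    intro u
    have h1 : ContinuousAt (fun u : K => ((t, u, b) : ℝ × K × K)) u :=
      (continuous_const.prodMk (continuous_id.prodMk continuous_const)).continuousAt
    have h2 := ContinuousAt.comp (f := fun u : K => ((t, u, b) : ℝ × K × K)) (hca t u b ht) h1
    exact h2
  -- THE KEY LEMMA (Fatou): a limit of good pairs is good.
  have key : ∀ (t s₀ : ℝ) (z y' : K) (sk : ℕ → ℝ) (yk : ℕ → K),
      0 < t → 0 < s₀ → 0 < p t x z → 0 < p s₀ z y' →
      (∀ k, 0 < sk k) → (∀ k, 0 < p (t + sk k) x (yk k)) →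
      Tendsto sk atTop (nhds s₀) → Tendsto yk atTop (nhds y') →
      0 < p (t + s₀) x y' := by
    intro t s₀ z y' sk yk ht hs₀ hz1 hz2 hsk hgood hsklim hyklim
    set g : K → ℝ := fun u => p t x u * p s₀ u y' with hg
    set gk : ℕ → K → ℝ := fun k u => p t x u * p (sk k) u (yk k) with hgk
    -- each gk is integrable since its Bochner integral is positive
    have hint : ∀ k, Integrable (gk k) μ := by
      intro k
      by_contra hni
      have hck := hCK (sk k) t (hsk k) ht x (yk k)
      rw [integral_undef hni] at hck
      exact absurd hck (ne_of_gt (hgood k))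
    -- pointwise convergence gk → g
    have hptw : ∀ u : K, Tendsto (fun k => gk k u) atTop (nhds (g u)) := by
      intro u
      have h2 : Tendsto (fun k => ((sk k, u, yk k) : ℝ × K × K)) atTop
          (nhds (s₀, u, y')) :=
        hsklim.prodMk_nhds (tendsto_const_nhds.prodMk_nhds hyklim)
      have h3 : Tendsto (fun k => p (sk k) u (yk k)) atTop (nhds (p s₀ u y')) :=
        (hca s₀ u y' hs₀).tendsto.comp h2
      exact h3.const_mul _
    have hgmeas : AEStronglyMeasurable g μ :=
      aestronglyMeasurable_of_tendsto_ae atTop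
        (fun k => (hint k).aestronglyMeasurable) (Eventually.of_forall hptw)
    -- the values converge
    have hval : Tendsto (fun k => p (t + sk k) x (yk k)) atTop
        (nhds (p (t + s₀) x y')) := by
      have h2 : Tendsto (fun k => ((t + sk k, x, yk k) : ℝ × K × K)) atTop
          (nhds (t + s₀, x, y')) :=
        (tendsto_const_nhds.add hsklim).prodMk_nhds
          (tendsto_const_nhds.prodMk_nhds hyklim)
      exact (hca (t + s₀) x y' (by linarith)).tendsto.comp h2
    -- upper bound via Fatou
    have e1 : ∀ k, ∫⁻ u, ENNReal.ofReal (gk k u) ∂μ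
        = ENNReal.ofReal (p (t + sk k) x (yk k)) := by
      intro k
      have hnn : 0 ≤ᵐ[μ] gk k := Eventually.of_forall fun u =>
        mul_nonneg (hnonneg t ht x u) (hnonneg _ (hsk k) u (yk k))
      rw [← ofReal_integral_eq_lintegral_ofReal (hint k) hnn,
        ← hCK (sk k) t (hsk k) ht x (yk k)]
    have hup : ∫⁻ u, ENNReal.ofReal (g u) ∂μ ≤ ENNReal.ofReal (p (t + s₀) x y') := by
      have hmeask : ∀ k, AEMeasurable (fun u => ENNReal.ofReal (gk k u)) μ :=
        fun k => ENNReal.measurable_ofReal.comp_aemeasurable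
          (hint k).aestronglyMeasurable.aemeasurable
      have hcongr : ∫⁻ u, ENNReal.ofReal (g u) ∂μ
          = ∫⁻ u, liminf (fun k => ENNReal.ofReal (gk k u)) atTop ∂μ := by
        apply lintegral_congr
        intro u
        exact (((ENNReal.continuous_ofReal.tendsto (g u)).comp (hptw u)).liminf_eq).symm
      calc ∫⁻ u, ENNReal.ofReal (g u) ∂μ
          = ∫⁻ u, liminf (fun k => ENNReal.ofReal (gk k u)) atTop ∂μ := hcongr
        _ ≤ liminf (fun k => ∫⁻ u, ENNReal.ofReal (gk k u) ∂μ) atTop :=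
            lintegral_liminf_le' hmeask
        _ = liminf (fun k => ENNReal.ofReal (p (t + sk k) x (yk k))) atTop := by
            simp only [e1]
        _ = ENNReal.ofReal (p (t + s₀) x y') :=
            ((ENNReal.continuous_ofReal.tendsto _).comp hval).liminf_eq
    -- lower bound: g is bounded below near z
    have hgz : 0 < g z := mul_pos hz1 hz2
    have hgcont : Continuous g := ((cu t ht x).mul (cv s₀ hs₀ y'))
    set W : Set K := {u | g z / 2 < g u} with hW
    have hWopen : IsOpen W := isOpen_lt continuous_const hgcont
    have hzW : z ∈ W := by
      simp only [hW, mem_setOf_eq]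
      linarith
    have hWpos : 0 < μ W := hfull z W (hWopen.mem_nhds hzW)
    have hmark : ENNReal.ofReal (g z / 2) * μ W ≤ ∫⁻ u, ENNReal.ofReal (g u) ∂μ := by
      have hsubW : W ⊆ {u | ENNReal.ofReal (g z / 2) ≤ ENNReal.ofReal (g u)} :=
        fun u hu => ENNReal.ofReal_le_ofReal (le_of_lt hu)
      calc ENNReal.ofReal (g z / 2) * μ W
          ≤ ENNReal.ofReal (g z / 2)
            * μ {u | ENNReal.ofReal (g z / 2) ≤ ENNReal.ofReal (g u)} :=
            mul_le_mul_right (measure_mono hsubW) _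
        _ ≤ ∫⁻ u, ENNReal.ofReal (g u) ∂μ :=
            mul_meas_ge_le_lintegral₀
              (ENNReal.measurable_ofReal.comp_aemeasurable hgmeas.aemeasurable) _
    have hlow : 0 < ENNReal.ofReal (g z / 2) * μ W :=
      ENNReal.mul_pos (ENNReal.ofReal_pos.mpr (by linarith)).ne' hWpos.ne'
    have hfin : 0 < ENNReal.ofReal (p (t + s₀) x y') :=
      lt_of_lt_of_le hlow (le_trans hmark hup)
    exact ENNReal.ofReal_pos.mp hfin
  -- TIME EXTENSION: positivity persists for all later times
  have timeext : ∀ (t : ℝ), 0 < t → ∀ w : K, 0 < p t x w →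
      ∀ s : ℝ, 0 < s → 0 < p (t + s) x w := by
    intro t ht w hw
    have hfc : ∀ s : ℝ, 0 < s → ContinuousAt (fun s : ℝ => p (t + s) x w) s := by
      intro s hs
      have h1 : ContinuousAt (fun s : ℝ => ((t + s, x, w) : ℝ × K × K)) s :=
        ((continuous_const.add continuous_id).prodMk
          (continuous_const.prodMk continuous_const)).continuousAt
      have h2 := ContinuousAt.comp (f := fun s : ℝ => ((t + s, x, w) : ℝ × K × K)) (hca (t + s) x w (by linarith)) h1
      exact h2
    set P : Set ℝ := {s | 0 < s ∧ 0 < p (t + s) x w} with hPdef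
    have hPopen : IsOpen P := by
      rw [isOpen_iff_mem_nhds]
      rintro a ⟨ha, hpa⟩
      have h1 : (fun s : ℝ => p (t + s) x w) ⁻¹' (Ioi 0) ∈ nhds a :=
        (hfc a ha).preimage_mem_nhds (Ioi_mem_nhds hpa)
      filter_upwards [h1, Ioi_mem_nhds ha] with s h2 h3
      exact ⟨h3, h2⟩
    have hne : (Ioi (0:ℝ) ∩ P).Nonempty := by
      have hc0 : ContinuousAt (fun s : ℝ => p (t + s) x w) 0 := by
        have h1 : ContinuousAt (fun s : ℝ => ((t + s, x, w) : ℝ × K × K)) 0 :=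
          ((continuous_const.add continuous_id).prodMk
            (continuous_const.prodMk continuous_const)).continuousAt
        have h2 := ContinuousAt.comp (f := fun s : ℝ => ((t + s, x, w) : ℝ × K × K)) (hca (t + 0) x w (by linarith)) h1
        exact h2
      have h1 : (fun s : ℝ => p (t + s) x w) ⁻¹' (Ioi 0) ∈ nhds 0 := by
        apply hc0.preimage_mem_nhds
        apply Ioi_mem_nhds
        show (0:ℝ) < p (t + 0) x w
        rw [add_zero]
        exact hw
      obtain ⟨ε, hε, hball⟩ := Metric.mem_nhds_iff.mp h1
      refine ⟨ε / 2, mem_Ioi.mpr (by positivity), by positivity, ?_⟩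
      have hmem : (ε / 2 : ℝ) ∈ Metric.ball (0:ℝ) ε := by
        simp only [Metric.mem_ball, Real.dist_eq, sub_zero]
        rw [abs_of_pos (by positivity)]
        linarith
      exact hball hmem
    have hcl : ∀ a ∈ Ioi (0:ℝ), a ∈ closure (Ioi (0:ℝ) ∩ P) → a ∈ P := by
      intro a ha hacl
      obtain ⟨u, hu, hulim⟩ := mem_closure_iff_seq_limit.mp hacl
      refine ⟨ha, ?_⟩
      exact key t a w w u (fun _ => w) ht ha hw (hdiag a ha w)
        (fun k => (hu k).2.1) (fun k => (hu k).2.2) hulim tendsto_const_nhds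
    intro s hs
    exact (stmt9_preconn_subset isPreconnected_Ioi hPopen hne hcl hs).2
  -- PATCHES: around each point, p 1 is positive on V × V
  have patch : ∀ c : K, ∃ V : Set K, IsOpen V ∧ c ∈ V ∧
      ∀ u ∈ V, ∀ v ∈ V, 0 < p 1 u v := by
    intro c
    have h1 : (fun q : ℝ × K × K => p q.1 q.2.1 q.2.2) ⁻¹' (Ioi 0)
        ∈ nhds ((1 : ℝ), c, c) :=
      (hca 1 c c one_pos).preimage_mem_nhds (Ioi_mem_nhds (hdiag 1 one_pos c))
    obtain ⟨A, hA, B, hB, hAB⟩ := mem_nhds_prod_iff.mp h1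
    obtain ⟨B₁, hB₁, B₂, hB₂, hB12⟩ := mem_nhds_prod_iff.mp hB
    refine ⟨interior B₁ ∩ interior B₂, isOpen_interior.inter isOpen_interior,
      ⟨mem_interior_iff_mem_nhds.mpr hB₁, mem_interior_iff_mem_nhds.mpr hB₂⟩, ?_⟩
    intro u hu v hv
    have hmem : ((1 : ℝ), u, v) ∈ A ×ˢ (B₁ ×ˢ B₂) :=
      ⟨mem_of_mem_nhds hA, interior_subset hu.1, interior_subset hv.2⟩
    exact hAB ⟨hmem.1, hB12 hmem.2⟩
  choose V hVopen hVmem hVpos using patch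
  -- the path from x to y
  set γ : Path x y := (PathConnectedSpace.joined x y).somePath with hγ
  set J : ℝ → K := ⇑γ.extend with hJ
  have hJcont : Continuous J := γ.continuous_extend
  have hJ0 : J 0 = x := γ.extend_zero
  have hJ1 : J 1 = y := γ.extend_one
  -- Lebesgue number for the covering of [0,1] by J ⁻¹' (V (J σ))
  have hcover : Icc (0:ℝ) 1 ⊆ ⋃ σ : ℝ, J ⁻¹' (V (J σ)) := by
    intro σ _
    exact mem_iUnion.mpr ⟨σ, hVmem (J σ)⟩
  obtain ⟨δ, hδ, hleb⟩ := lebesgue_number_lemma_of_metric (isCompact_Icc)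
    (fun σ : ℝ => (hVopen (J σ)).preimage hJcont) hcover
  obtain ⟨m, hm⟩ := exists_nat_gt (1 / δ)
  have hm0 : (0:ℝ) < m := lt_trans (by positivity) hm
  have hinvm : (1:ℝ) / m < δ := by
    rw [div_lt_iff₀ hm0]
    rw [div_lt_iff₀ hδ] at hm
    nlinarith
  -- main induction along the path
  have main : ∀ i : ℕ, i ≤ m → 0 < p (2 * (i:ℝ) + 1) x (J ((i:ℝ) / m)) := by
    intro i
    induction i with
    | zero =>
      intro _
      simp only [Nat.cast_zero, mul_zero, zero_add, zero_div, hJ0]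
      exact hdiag 1 one_pos x
    | succ i ih =>
      intro him
      have hi : i ≤ m := Nat.le_of_succ_le him
      have hzi := ih hi
      -- τ_i ∈ [0,1]
      have hτmem : (i:ℝ) / m ∈ Icc (0:ℝ) 1 := by
        constructor
        · positivity
        · rw [div_le_one hm0]
          exact_mod_cast hi
      obtain ⟨σstar, hball⟩ := hleb ((i:ℝ) / m) hτmem
      have hstep : (i:ℝ)/m ≤ ((i:ℝ)+1)/m := by
        gcongr
        linarith
      -- the whole subinterval lies in the patch
      have hSsub : Icc ((i:ℝ)/m) (((i:ℝ)+1)/m) ⊆ J ⁻¹' (V (J σstar)) := by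
        intro σ hσ
        apply hball
        rw [Metric.mem_ball, Real.dist_eq, abs_of_nonneg (by linarith [hσ.1])]
        have h2 : σ ≤ ((i:ℝ)+1)/m := hσ.2
        have h3 : ((i:ℝ)+1)/m - (i:ℝ)/m = 1/m := by ring
        linarith
      have hτi_in : J ((i:ℝ)/m) ∈ V (J σstar) :=
        hSsub ⟨le_refl _, hstep⟩
      -- positivity at time 2i+2 at the left endpoint
      have hz1' : 0 < p (2*(i:ℝ)+1+1) x (J ((i:ℝ)/m)) :=
        timeext _ (by positivity) _ hzi 1 one_pos
      -- the clopen set along the subinterval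
      set P2 : Set ℝ := {σ : ℝ | 0 < p (2*(i:ℝ)+1+1+1) x (J σ)} with hP2def
      have hfP2 : Continuous fun σ : ℝ => p (2*(i:ℝ)+1+1+1) x (J σ) :=
        (cu _ (by positivity) x).comp hJcont
      have hP2open : IsOpen P2 := isOpen_lt continuous_const hfP2
      have hne2 : (Icc ((i:ℝ)/m) (((i:ℝ)+1)/m) ∩ P2).Nonempty :=
        ⟨(i:ℝ)/m, ⟨le_refl _, hstep⟩, timeext _ (by positivity) _ hz1' 1 one_pos⟩
      have hcl2 : ∀ a ∈ Icc ((i:ℝ)/m) (((i:ℝ)+1)/m),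
          a ∈ closure (Icc ((i:ℝ)/m) (((i:ℝ)+1)/m) ∩ P2) → a ∈ P2 := by
        intro a haS hacl
        obtain ⟨u, hu, hulim⟩ := mem_closure_iff_seq_limit.mp hacl
        have hJa : J a ∈ V (J σstar) := hSsub haS
        have hz2' : 0 < p 1 (J ((i:ℝ)/m)) (J a) := hVpos _ _ hτi_in _ hJa
        have hyk : Tendsto (fun k => J (u k)) atTop (nhds (J a)) :=
          (hJcont.tendsto a).comp hulim
        exact key (2*(i:ℝ)+1+1) 1 (J ((i:ℝ)/m)) (J a) (fun _ => 1) (fun k => J (u k))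
          (by positivity) one_pos hz1' hz2' (fun _ => one_pos)
          (fun k => (hu k).2) tendsto_const_nhds hyk
      have hfinal := stmt9_preconn_subset isPreconnected_Icc hP2open hne2 hcl2
        (⟨hstep, le_refl _⟩ : ((i:ℝ)+1)/m ∈ Icc ((i:ℝ)/m) (((i:ℝ)+1)/m))
      have hcast1 : ((i+1 : ℕ) : ℝ) = (i:ℝ) + 1 := by push_cast; ring
      have hcast2 : 2*((i:ℝ)+1)+1 = 2*(i:ℝ)+1+1+1 := by ring
      rw [hcast1, hcast2]
      exact hfinal
  have hy := main m le_rfl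
  rw [div_self hm0.ne', hJ1] at hy
  refine ⟨2*m+1, by positivity, ?_⟩
  have hcast : ((2*m+1 : ℕ) : ℝ) = 2*(m:ℝ)+1 := by push_cast; ring
  rw [hcast]
  exact hy
end

section
/- Let E ⊂ ℝ^d be a bounded Lipschitz domain and c₂ > 0. Then there exist ε₀ > 0 and c₃ > 0 (depending on d, E, c₂) such that for all s ∈ (0,1], all ε ∈ (0,ε₀), and all x ∈ closure(E): (1/ε) ∫_{E_ε} s^{-d/2} exp(−c₂|x−y|²/s) dy ≤ c₃/√s, where E_ε = {y ∈ E : dist(y, ∂E) < ε} is the inner collar of width ε. -/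
open MeasureTheory Set Filter Metric

/-- `E ⊆ ℝ^d` is a bounded Lipschitz domain: a bounded connected open set whose
boundary is locally, after a rigid motion, the region above the graph of a
Lipschitz function of `d-1` variables. -/
def IsBoundedLipschitzDomain (d : ℕ) (E : Set (EuclideanSpace ℝ (Fin d))) : Prop :=
  IsOpen E ∧ Bornology.IsBounded E ∧ IsConnected E ∧
  ∀ x ∈ frontier E, ∃ r > (0 : ℝ),
    ∃ (O : EuclideanSpace ℝ (Fin d) ≃ᵢ EuclideanSpace ℝ (Fin d))
      (φ : (Fin (d - 1) → ℝ) → ℝ) (L : NNReal), LipschitzWith L φ ∧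
      ∃ h : d - 1 < d, ∀ y ∈ Metric.ball x r,
        (y ∈ E ↔ φ (fun i => O y (i.castLE (Nat.sub_le d 1))) < O y ⟨d - 1, h⟩)

/-!
Cover the compact boundary by finitely many Lipschitz-graph charts. In a chart with Lipschitz
constant `L`, the height above the graph is `(1 + L)`-Lipschitz, positive on `E` and
non-positive on `∂E`, so the collar `E_ε` lies in a slab of height `(1 + L) ε` over the graph;
by Fubini it meets every ball of radius `r` in volume at most `C ε r^(d-1)`. Splitting the
Gaussian integral into the shells `k √s ≤ |x - y| < (k + 1) √s` then bounds it by
`C ε s^(-d/2) √s^(d-1) ∑ₖ exp(-c₂ k²) (k + 1)^(d-1)`, which is `O(ε / √s)`.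
-/

theorem Real.rpow_neg_natCast_div_two {s : ℝ} (hs : 0 ≤ s) (m : ℕ) :
    s ^ (-(m : ℝ) / 2) = (√s ^ m)⁻¹ := by
  rw [Real.sqrt_eq_rpow, ← Real.rpow_natCast, ← Real.rpow_mul hs, ← Real.rpow_neg hs]
  ring_nf

theorem summable_exp_neg_mul_sq_mul_succ_pow {c : ℝ} (hc : 0 < c) (n : ℕ) :
    Summable fun k : ℕ => Real.exp (-c * k ^ 2) * (k + 1) ^ n := by
  have hshift : Summable fun k : ℕ => ((k + 1 : ℕ) : ℝ) ^ n * Real.exp (-c * (k + 1 : ℕ)) :=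
    (summable_nat_add_iff 1).2 (Real.summable_pow_mul_exp_neg_nat_mul n hc)
  refine (hshift.mul_left (Real.exp c)).of_nonneg_of_le (fun k => by positivity) fun k => ?_
  have hk : (k : ℝ) ≤ k ^ 2 := by exact_mod_cast Nat.le_self_pow two_ne_zero k
  have hexp : Real.exp (-c * k ^ 2) ≤ Real.exp c * Real.exp (-c * (k + 1 : ℕ)) := by
    rw [← Real.exp_add]
    push_cast
    exact Real.exp_le_exp.2 (by nlinarith)
  push_cast
  calc Real.exp (-c * k ^ 2) * (k + 1) ^ n
      ≤ Real.exp c * Real.exp (-c * (k + 1 : ℕ)) * (k + 1) ^ n := by gcongr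
    _ = _ := by push_cast; ring

theorem exists_nat_mem_ball_succ_mul_diff {α : Type*} [PseudoMetricSpace α] (x y : α) {q : ℝ}
    (hq : 0 < q) : ∃ k : ℕ, y ∈ ball x ((k + 1) * q) \ ball x (k * q) := by
  refine ⟨⌊dist y x / q⌋₊, ?_, ?_⟩
  · rw [mem_ball, ← div_lt_iff₀ hq]
    exact Nat.lt_floor_add_one _
  · rw [mem_ball, not_lt, ← le_div_iff₀ hq]
    exact Nat.floor_le (by positivity)

theorem lintegral_exp_neg_dist_sq_le {α : Type*} [PseudoMetricSpace α] [MeasurableSpace α]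
    [OpensMeasurableSpace α] {μ : Measure α} {A : Set α} (hA : MeasurableSet A) (x : α) {n : ℕ}
    {M c s : ℝ} (hM : 0 ≤ M) (hc : 0 ≤ c) (hs : 0 < s)
    (hvol : ∀ r, μ (A ∩ ball x r) ≤ ENNReal.ofReal (M * r ^ n)) :
    ∫⁻ y in A, ENNReal.ofReal (Real.exp (-c * dist x y ^ 2 / s)) ∂μ ≤
      ENNReal.ofReal (M * √s ^ n) *
        ∑' k : ℕ, ENNReal.ofReal (Real.exp (-c * k ^ 2) * (k + 1) ^ n) := by
  set q := √s
  have hq : 0 < q := Real.sqrt_pos.2 hs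
  set shell : ℕ → Set α := fun k => A ∩ (ball x ((k + 1) * q) \ ball x (k * q))
  have hcover : A ⊆ ⋃ k, shell k := fun y hy =>
    have ⟨k, hk⟩ := exists_nat_mem_ball_succ_mul_diff x y hq
    mem_iUnion.2 ⟨k, hy, hk⟩
  have hdecay : ∀ k, ∀ y ∈ shell k,
      ENNReal.ofReal (Real.exp (-c * dist x y ^ 2 / s)) ≤
        ENNReal.ofReal (Real.exp (-c * k ^ 2)) := by
    rintro k y ⟨-, -, hy⟩
    have hky : k * q ≤ dist x y := by rw [dist_comm]; simpa using hy
    have hsq : (k : ℝ) ^ 2 * s ≤ dist x y ^ 2 := by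
      rw [← Real.sq_sqrt hs.le, ← mul_pow]
      exact pow_le_pow_left₀ (by positivity) hky 2
    gcongr
    rw [div_le_iff₀ hs]
    nlinarith
  calc ∫⁻ y in A, ENNReal.ofReal (Real.exp (-c * dist x y ^ 2 / s)) ∂μ
      ≤ ∑' k, ∫⁻ y in shell k, ENNReal.ofReal (Real.exp (-c * dist x y ^ 2 / s)) ∂μ :=
        (lintegral_mono_set hcover).trans (lintegral_iUnion_le _ _)
    _ ≤ ∑' k : ℕ, ENNReal.ofReal (Real.exp (-c * k ^ 2)) * μ (shell k) := by
        gcongr with k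
        rw [← setLIntegral_const]
        exact setLIntegral_mono' (hA.inter (measurableSet_ball.diff measurableSet_ball))
          (hdecay k)
    _ ≤ ∑' k : ℕ,
          ENNReal.ofReal (Real.exp (-c * k ^ 2)) * ENNReal.ofReal (M * ((k + 1) * q) ^ n) := by
        gcongr with k
        exact (measure_mono (inter_subset_inter_right _ sdiff_subset)).trans (hvol _)
    _ = _ := by
        rw [← ENNReal.tsum_mul_left]
        congr 1 with k
        rw [← ENNReal.ofReal_mul (by positivity), ← ENNReal.ofReal_mul (by positivity), mul_pow]
        ring_nf

theorem IsometryEquiv.measurePreserving_volume {V : Type*} [NormedAddCommGroup V]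
    [InnerProductSpace ℝ V] [FiniteDimensional ℝ V] [MeasurableSpace V] [BorelSpace V]
    (O : V ≃ᵢ V) : MeasurePreserving O := by
  simpa [InnerProductSpace.euclideanHausdorffMeasure_eq_volume] using
    O.measurePreserving_euclideanHausdorffMeasure (Module.finrank ℝ V)

noncomputable def innerCollar {X : Type*} [PseudoMetricSpace X] (E : Set X) (ε : ℝ) : Set X :=
  {y ∈ E | infDist y (frontier E) < ε}

theorem IsOpen.measurableSet_innerCollar {X : Type*} [PseudoMetricSpace X] [MeasurableSpace X]
    [OpensMeasurableSpace X] {E : Set X} (hE : IsOpen E) (ε : ℝ) :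
    MeasurableSet (innerCollar E ε) :=
  hE.measurableSet.inter ((continuous_infDist_pt _).measurable measurableSet_Iio)

section GraphChart

variable {n : ℕ}

/- For `d = n + 1`, `j.castSucc` and `Fin.last n` are definitionally the `i.castLE _` and
`⟨d - 1, _⟩` of `IsBoundedLipschitzDomain`. -/
noncomputable def frameCoords
    (O : EuclideanSpace ℝ (Fin (n + 1)) ≃ᵢ EuclideanSpace ℝ (Fin (n + 1)))
    (y : EuclideanSpace ℝ (Fin (n + 1))) : (Fin n → ℝ) × ℝ :=
  (fun j => O y j.castSucc, O y (Fin.last n))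

noncomputable def graphHeight
    (O : EuclideanSpace ℝ (Fin (n + 1)) ≃ᵢ EuclideanSpace ℝ (Fin (n + 1)))
    (φ : (Fin n → ℝ) → ℝ) (y : EuclideanSpace ℝ (Fin (n + 1))) : ℝ :=
  (frameCoords O y).2 - φ (frameCoords O y).1

variable (O : EuclideanSpace ℝ (Fin (n + 1)) ≃ᵢ EuclideanSpace ℝ (Fin (n + 1)))

theorem measurePreserving_frameCoords : MeasurePreserving (frameCoords O) := by
  have h := (Measure.measurePreserving_swap.comp
    (volume_preserving_piFinSuccAbove (fun _ : Fin (n + 1) => ℝ) (Fin.last n))).comp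
    ((EuclideanSpace.volume_preserving_symm_measurableEquiv_toLp (Fin (n + 1))).comp
      O.measurePreserving_volume)
  convert h using 1
  · funext y
    simp [frameCoords]
    rfl
  · rfl

theorem lipschitzWith_frameCoords_fst : LipschitzWith 1 (fun y => (frameCoords O y).1) :=
  LipschitzWith.of_dist_le_mul fun y z => by
    simpa [frameCoords, dist_pi_le_iff dist_nonneg, ← O.dist_eq y z] using
      fun j : Fin n => PiLp.dist_apply_le (O y) (O z) j.castSucc

theorem lipschitzWith_frameCoords_snd : LipschitzWith 1 (fun y => (frameCoords O y).2) :=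
  LipschitzWith.of_dist_le_mul fun y z => by
    simpa [frameCoords, ← O.dist_eq y z] using PiLp.dist_apply_le (O y) (O z) (Fin.last n)

theorem lipschitzWith_graphHeight {φ : (Fin n → ℝ) → ℝ} {L : NNReal} (hφ : LipschitzWith L φ) :
    LipschitzWith (1 + L) (graphHeight O φ) := by
  have h := (lipschitzWith_frameCoords_snd O).sub (hφ.comp (lipschitzWith_frameCoords_fst O))
  rwa [mul_one] at h

theorem volume_ball_inter_graphHeight_preimage_le {φ : (Fin n → ℝ) → ℝ} (hφ : Measurable φ)
    (x : EuclideanSpace ℝ (Fin (n + 1))) {r a : ℝ} (hr : 0 ≤ r) (ha : 0 ≤ a) :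
    volume (ball x r ∩ graphHeight O φ ⁻¹' Ioo 0 a) ≤ ENNReal.ofReal (a * (2 * r) ^ n) := by
  set B := closedBall (frameCoords O x).1 r
  have hsub : ball x r ∩ graphHeight O φ ⁻¹' Ioo 0 a ⊆
      frameCoords O ⁻¹' regionBetween φ (fun z => φ z + a) B := by
    rintro y ⟨hy, hpos, hlt⟩
    refine ⟨?_, ?_, ?_⟩
    · have := (lipschitzWith_frameCoords_fst O).dist_le_mul y x
      simp only [NNReal.coe_one, one_mul] at this
      exact mem_closedBall.2 (this.trans (mem_ball.1 hy).le)
    · simp only [graphHeight] at hpos; linarith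
    · simp only [graphHeight] at hlt; linarith
  calc volume (ball x r ∩ graphHeight O φ ⁻¹' Ioo 0 a)
      ≤ volume (regionBetween φ (fun z => φ z + a) B) :=
        (measure_mono hsub).trans_eq <| (measurePreserving_frameCoords O).measure_preimage
          (measurableSet_regionBetween hφ (hφ.add_const a)
            measurableSet_closedBall).nullMeasurableSet
    _ = ∫⁻ _ in B, ENNReal.ofReal a :=
        (volume_regionBetween_eq_lintegral' hφ (hφ.add_const a) measurableSet_closedBall).trans
          (by simp [B])
    _ = ENNReal.ofReal (a * (2 * r) ^ n) := by
        rw [setLIntegral_const, Real.volume_pi_closedBall _ hr, Fintype.card_fin,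
          ENNReal.ofReal_mul ha]

theorem graphHeight_lt_of_dist_lt {φ : (Fin n → ℝ) → ℝ} {L : NNReal} (hφ : LipschitzWith L φ)
    {y w : EuclideanSpace ℝ (Fin (n + 1))} {ε : ℝ} (hw : graphHeight O φ w ≤ 0)
    (hyw : dist y w < ε) : graphHeight O φ y < (1 + L) * ε := by
  have hlip := (lipschitzWith_graphHeight O hφ).dist_le_mul y w
  rw [Real.dist_eq, abs_le] at hlip
  push_cast at hlip
  have : (1 + L : ℝ) * dist y w < (1 + L) * ε := mul_lt_mul_of_pos_left hyw (by positivity)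
  linarith [hlip.2]

end GraphChart

section Collar

variable {n : ℕ}

theorem graphHeight_mem_Ioo_of_mem_frontier {E : Set (EuclideanSpace ℝ (Fin (n + 1)))}
    (hE : IsOpen E) {p : EuclideanSpace ℝ (Fin (n + 1))} {R : ℝ}
    {O : EuclideanSpace ℝ (Fin (n + 1)) ≃ᵢ EuclideanSpace ℝ (Fin (n + 1))}
    {φ : (Fin n → ℝ) → ℝ} {L : NNReal} (hφ : LipschitzWith L φ)
    (hchart : ∀ y ∈ ball p R, y ∈ E ↔ 0 < graphHeight O φ y)
    {w y : EuclideanSpace ℝ (Fin (n + 1))} (hw : w ∈ frontier E) (hwp : w ∈ ball p (R / 2))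
    (hy : y ∈ E) {ε : ℝ} (hyw : dist y w < ε) (hεR : ε ≤ R / 2) :
    graphHeight O φ y ∈ Ioo 0 ((1 + L) * ε) := by
  have hwR : w ∈ ball p R :=
    ball_subset_ball (by linarith [dist_nonneg.trans (mem_ball.1 hwp).le]) hwp
  have hyR : y ∈ ball p R := mem_ball.2 <| calc
    dist y p ≤ dist y w + dist w p := dist_triangle y w p
    _ < ε + R / 2 := add_lt_add hyw (mem_ball.1 hwp)
    _ ≤ R := by linarith
  have hwE : w ∉ E := fun h => (hE.frontier_eq ▸ hw).2 h
  refine ⟨(hchart y hyR).1 hy, graphHeight_lt_of_dist_lt O hφ ?_ hyw⟩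
  exact not_lt.1 fun h => hwE ((hchart w hwR).2 h)

theorem volume_innerCollar_inter_ball_le_of_cover {E : Set (EuclideanSpace ℝ (Fin (n + 1)))}
    (hE : IsOpen E) (hfr : (frontier E).Nonempty) {t : Finset (EuclideanSpace ℝ (Fin (n + 1)))}
    {R : EuclideanSpace ℝ (Fin (n + 1)) → ℝ}
    {O : EuclideanSpace ℝ (Fin (n + 1)) →
      EuclideanSpace ℝ (Fin (n + 1)) ≃ᵢ EuclideanSpace ℝ (Fin (n + 1))}
    {φ : EuclideanSpace ℝ (Fin (n + 1)) → (Fin n → ℝ) → ℝ}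
    {L : EuclideanSpace ℝ (Fin (n + 1)) → NNReal}
    (hφ : ∀ p ∈ t, LipschitzWith (L p) (φ p))
    (hchart : ∀ p ∈ t, ∀ y ∈ ball p (R p), y ∈ E ↔ 0 < graphHeight (O p) (φ p) y)
    (hcover : frontier E ⊆ ⋃ p ∈ t, ball p (R p / 2)) {ε : ℝ} (hε : 0 < ε)
    (hεR : ∀ p ∈ t, ε ≤ R p / 2) (x : EuclideanSpace ℝ (Fin (n + 1))) {r : ℝ} (hr : 0 ≤ r) :
    volume (innerCollar E ε ∩ ball x r) ≤
      ENNReal.ofReal ((∑ p ∈ t, (1 + (L p : ℝ)) * 2 ^ n) * ε * r ^ n) := by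
  have hsub : innerCollar E ε ∩ ball x r ⊆
      ⋃ p ∈ t, ball x r ∩ graphHeight (O p) (φ p) ⁻¹' Ioo 0 ((1 + L p) * ε) := by
    rintro y ⟨⟨hyE, hyfr⟩, hyx⟩
    obtain ⟨w, hw, hyw⟩ := (infDist_lt_iff hfr).1 hyfr
    obtain ⟨p, hp, hwp⟩ := mem_iUnion₂.1 (hcover hw)
    exact mem_iUnion₂.2 ⟨p, hp, hyx,
      graphHeight_mem_Ioo_of_mem_frontier hE (hφ p hp) (hchart p hp) hw hwp hyE hyw (hεR p hp)⟩
  calc volume (innerCollar E ε ∩ ball x r)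
      ≤ ∑ p ∈ t, volume (ball x r ∩ graphHeight (O p) (φ p) ⁻¹' Ioo 0 ((1 + L p) * ε)) :=
        (measure_mono hsub).trans (measure_biUnion_finset_le t _)
    _ ≤ ∑ p ∈ t, ENNReal.ofReal ((1 + L p) * ε * (2 * r) ^ n) := by
        gcongr with p hp
        exact volume_ball_inter_graphHeight_preimage_le (O p) (hφ p hp).continuous.measurable x hr
          (by positivity)
    _ = ENNReal.ofReal ((∑ p ∈ t, (1 + (L p : ℝ)) * 2 ^ n) * ε * r ^ n) := by
        rw [← ENNReal.ofReal_sum_of_nonneg fun p _ => by positivity, Finset.sum_mul,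
          Finset.sum_mul]
        exact congrArg ENNReal.ofReal (Finset.sum_congr rfl fun p _ => by ring)

end Collar

theorem IsBoundedLipschitzDomain.exists_volume_innerCollar_inter_ball_le {n : ℕ}
    {E : Set (EuclideanSpace ℝ (Fin (n + 1)))} (hE : IsBoundedLipschitzDomain (n + 1) E) :
    ∃ ε₀ > (0 : ℝ), ∃ C > (0 : ℝ), ∀ ε ∈ Ioo 0 ε₀, ∀ x r,
      volume (innerCollar E ε ∩ ball x r) ≤ ENNReal.ofReal (C * ε * r ^ n) := by
  obtain ⟨hopen, hbdd, hconn, hlocal⟩ := hE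
  choose! R hR O φ L hφ hgraph using hlocal
  have hchart : ∀ p ∈ frontier E, ∀ y ∈ ball p (R p), y ∈ E ↔ 0 < graphHeight (O p) (φ p) y :=
    fun p hp y hy => ((hgraph p hp).2 y hy).trans sub_pos.symm
  have hfr : (frontier E).Nonempty := nonempty_frontier_iff.2
    ⟨hconn.nonempty, fun h => NormedSpace.unbounded_univ ℝ _ (h ▸ hbdd)⟩
  have hfr_compact : IsCompact (frontier E) :=
    isCompact_of_isClosed_isBounded isClosed_frontier (hbdd.closure.subset frontier_subset_closure)
  obtain ⟨t, ht, hcover⟩ := hfr_compact.elim_nhds_subcover (fun p => ball p (R p / 2))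
    fun p hp => ball_mem_nhds p (half_pos (hR p hp))
  have htne : t.Nonempty := by
    obtain ⟨w, hw⟩ := hfr
    obtain ⟨p, hp, -⟩ := mem_iUnion₂.1 (hcover hw)
    exact ⟨p, hp⟩
  refine ⟨t.inf' htne (fun p => R p / 2),
    (Finset.lt_inf'_iff htne).2 fun p hp => half_pos (hR p (ht p hp)),
    ∑ p ∈ t, (1 + (L p : ℝ)) * 2 ^ n, Finset.sum_pos (fun p _ => by positivity) htne, ?_⟩
  rintro ε ⟨hε, hεε₀⟩ x r
  rcases lt_or_ge r 0 with hr | hr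
  · simp [ball_eq_empty.2 hr.le]
  exact volume_innerCollar_inter_ball_le_of_cover hopen hfr (fun p hp => hφ p (ht p hp))
    (fun p hp => hchart p (ht p hp)) hcover hε
    (fun p hp => hεε₀.le.trans (Finset.inf'_le _ hp)) x hr

/-- Collar estimate on a bounded Lipschitz domain: the normalized Gaussian mass of
the inner collar `E_ε` is bounded by `c₃/√s`, uniformly in `x ∈ closure E`,
`s ∈ (0,1]` and small `ε`. -/
theorem stmt_12 (d : ℕ) (hd : 2 ≤ d) (E : Set (EuclideanSpace ℝ (Fin d)))
    (hE : IsBoundedLipschitzDomain d E) (c₂ : ℝ) (hc₂ : 0 < c₂) :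
    ∃ ε₀ > (0 : ℝ), ∃ c₃ > (0 : ℝ),
      ∀ s ∈ Set.Ioc (0 : ℝ) 1, ∀ ε ∈ Set.Ioo (0 : ℝ) ε₀, ∀ x ∈ closure E,
        (1 / ε) * ∫ y in {y ∈ E | Metric.infDist y (frontier E) < ε},
            s ^ (-(d : ℝ) / 2) * Real.exp (-c₂ * dist x y ^ 2 / s)
          ≤ c₃ / Real.sqrt s := by
  obtain ⟨n, rfl⟩ : ∃ n, d = n + 1 := ⟨d - 1, by omega⟩
  obtain ⟨ε₀, hε₀, C, hC, hvol⟩ := hE.exists_volume_innerCollar_inter_ball_le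
  have hsum := summable_exp_neg_mul_sq_mul_succ_pow hc₂ n
  set S := ∑' k : ℕ, Real.exp (-c₂ * k ^ 2) * (k + 1) ^ n
  have hS : 0 < S := hsum.tsum_pos (fun k => by positivity) 0 (by simp)
  refine ⟨ε₀, hε₀, C * S, by positivity, ?_⟩
  rintro s ⟨hs, -⟩ ε ⟨hε, hεε₀⟩ x -
  have hlint := lintegral_exp_neg_dist_sq_le (hE.1.measurableSet_innerCollar ε) x
    (by positivity : 0 ≤ C * ε) hc₂.le hs (hvol ε ⟨hε, hεε₀⟩ x)
  rw [← ENNReal.ofReal_tsum_of_nonneg (fun k => by positivity) hsum,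
    ← ENNReal.ofReal_mul (by positivity)] at hlint
  have hint :
      ∫ y in innerCollar E ε, Real.exp (-c₂ * dist x y ^ 2 / s) ≤ C * ε * √s ^ n * S := by
    rw [integral_eq_lintegral_of_nonneg_ae (ae_of_all _ fun y => by positivity)
      (by fun_prop : Measurable _).aestronglyMeasurable]
    exact ENNReal.toReal_le_of_le_ofReal (by positivity) hlint
  calc (1 / ε) * ∫ y in innerCollar E ε,
          s ^ (-((n + 1 : ℕ) : ℝ) / 2) * Real.exp (-c₂ * dist x y ^ 2 / s)
      ≤ (1 / ε) * (s ^ (-((n + 1 : ℕ) : ℝ) / 2) * (C * ε * √s ^ n * S)) := by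
        rw [integral_const_mul]
        gcongr
    _ = C * S / √s := by
        rw [Real.rpow_neg_natCast_div_two hs.le]
        field_simp
        ring
end

section
/- Let E ⊂ ℝ^d be a bounded Lipschitz domain, and suppose constants c₁, c₂, c₃ > 0 satisfy: for all s ∈ (0,1], ε small, and x ∈ closure(E), (1/ε)∫_{E_ε} s^{-d/2} e^{−c₂|x−y|²/s} dy ≤ c₃/√s, and the surface-measure approximation ∫_{∂E} g dH^{d−1} ≤ liminf_{ε→0} (1/ε)∫_{E_ε} g dm for continuous g ≥ 0. Then sup_{x∈closure(E)} ∫_0^t ∫_{∂E} s^{-d/2} e^{−c₂|x−y|²/s} dH^{d−1}(y) ds ≤ 2 c₃ √t, and in particular this quantity tends to 0 as t → 0. -/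
open MeasureTheory Set Filter Metric
open scoped MeasureTheory

/-- Kato-class bound for the surface measure of a bounded Lipschitz domain with
respect to Gaussian-type kernels:
`sup_{x ∈ closure E} ∫₀ᵗ ∫_{∂E} s^{-d/2} e^{-c₂|x-y|²/s} dH^{d-1}(y) ds ≤ 2c₃√t`. -/
theorem stmt_13 (d : ℕ) (hd : 2 ≤ d) (E : Set (EuclideanSpace ℝ (Fin d)))
    (hE : IsBoundedLipschitzDomain d E)
    (c₁ c₂ c₃ ε₀ : ℝ) (hc₁ : 0 < c₁) (hc₂ : 0 < c₂) (hc₃ : 0 < c₃) (hε₀ : 0 < ε₀)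
    -- collar estimate
    (hcollar : ∀ s ∈ Set.Ioc (0 : ℝ) 1, ∀ ε ∈ Set.Ioo (0 : ℝ) ε₀, ∀ x ∈ closure E,
      (1 / ε) * ∫ y in {y ∈ E | Metric.infDist y (frontier E) < ε},
          s ^ (-(d : ℝ) / 2) * Real.exp (-c₂ * dist x y ^ 2 / s)
        ≤ c₃ / Real.sqrt s)
    -- surface-measure approximation by inner collars
    (happrox : ∀ g : EuclideanSpace ℝ (Fin d) → ℝ, Continuous g → (∀ y, 0 ≤ g y) →
      (∫ y in frontier E, g y ∂(μH[(d : ℝ) - 1]))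
        ≤ Filter.liminf
            (fun ε => (1 / ε) *
              ∫ y in {y ∈ E | Metric.infDist y (frontier E) < ε}, g y)
            (nhdsWithin (0 : ℝ) (Set.Ioi (0 : ℝ)))) :
    (∀ t ∈ Set.Ioc (0 : ℝ) 1, ∀ x ∈ closure E,
      (∫ s in (0 : ℝ)..t,
        ∫ y in frontier E,
          s ^ (-(d : ℝ) / 2) * Real.exp (-c₂ * dist x y ^ 2 / s)
        ∂(μH[(d : ℝ) - 1]))
      ≤ 2 * c₃ * Real.sqrt t) ∧
    Tendsto (fun t => 2 * c₃ * Real.sqrt t)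
      (nhdsWithin (0 : ℝ) (Set.Ioi (0 : ℝ))) (nhds 0) := by

  constructor
  · intro t ht x hx
    set F : ℝ → ℝ := fun s => ∫ y in frontier E,
        s ^ (-(d : ℝ) / 2) * Real.exp (-c₂ * dist x y ^ 2 / s) ∂(μH[(d : ℝ) - 1]) with hF
    have hGint : IntervalIntegrable (fun s : ℝ => c₃ * s ^ (-1/2 : ℝ)) volume 0 t :=
      (intervalIntegral.intervalIntegrable_rpow' (by norm_num)).const_mul c₃
    have hbound : ∀ s ∈ Set.Icc (0:ℝ) t, F s ≤ c₃ * s ^ (-1/2 : ℝ) := by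
      intro s hs
      have hdne : (-(d:ℝ)/2) ≠ 0 := by
        have h2d : (2:ℝ) ≤ (d:ℝ) := by exact_mod_cast hd
        intro h; nlinarith
      rcases eq_or_lt_of_le hs.1 with h0 | h0
      · have : F s = 0 := by
          simp only [hF, ← h0, Real.zero_rpow hdne, zero_mul]
          simp
        rw [this, ← h0, Real.zero_rpow (by norm_num : (-1/2 : ℝ) ≠ 0)]
        norm_num
      · -- s > 0
        have hs1 : s ∈ Set.Ioc (0:ℝ) 1 := ⟨h0, hs.2.trans ht.2⟩
        have hcont : Continuous fun y : EuclideanSpace ℝ (Fin d) =>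
            s ^ (-(d : ℝ) / 2) * Real.exp (-c₂ * dist x y ^ 2 / s) :=
          continuous_const.mul (Real.continuous_exp.comp (by fun_prop))
        have hnn : ∀ y, 0 ≤ s ^ (-(d : ℝ) / 2) * Real.exp (-c₂ * dist x y ^ 2 / s) := by
          intro y
          exact mul_nonneg (Real.rpow_nonneg h0.le _) (Real.exp_pos _).le
        have h1 := happrox _ hcont hnn
        have h2 : Filter.liminf
            (fun ε => (1 / ε) * ∫ y in {y ∈ E | Metric.infDist y (frontier E) < ε},
              s ^ (-(d : ℝ) / 2) * Real.exp (-c₂ * dist x y ^ 2 / s))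
            (nhdsWithin (0 : ℝ) (Set.Ioi (0 : ℝ))) ≤ c₃ / Real.sqrt s := by
          rw [Filter.liminf_eq]
          apply Real.sSup_le
          · intro a ha
            simp only [Set.mem_setOf_eq] at ha
            have hev : ∀ᶠ ε in nhdsWithin (0:ℝ) (Set.Ioi 0),
                (1 / ε) * ∫ y in {y ∈ E | Metric.infDist y (frontier E) < ε},
                  s ^ (-(d : ℝ) / 2) * Real.exp (-c₂ * dist x y ^ 2 / s) ≤ c₃ / Real.sqrt s := by
              filter_upwards [Ioo_mem_nhdsGT_of_mem (Set.left_mem_Ico.mpr hε₀)]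
                with ε hε
              exact hcollar s hs1 ε hε x hx
            obtain ⟨ε, h₁, h₂⟩ := (ha.and hev).exists
            exact h₁.trans h₂
          · positivity
        have h3 : c₃ / Real.sqrt s = c₃ * s ^ (-1/2 : ℝ) := by
          rw [Real.sqrt_eq_rpow, div_eq_mul_inv, ← Real.rpow_neg h0.le]
          norm_num
        calc F s ≤ _ := h1
          _ ≤ c₃ / Real.sqrt s := h2
          _ = _ := h3
    have key : (∫ s in (0:ℝ)..t, F s) ≤ ∫ s in (0:ℝ)..t, c₃ * s ^ (-1/2 : ℝ) := by
      by_cases hFi : IntervalIntegrable F volume 0 t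
      · exact intervalIntegral.integral_mono_on ht.1.le hFi hGint hbound
      · rw [intervalIntegral.integral_undef hFi]
        rw [intervalIntegral.integral_const_mul]
        rw [integral_rpow (Or.inl (by norm_num))]
        have : (0:ℝ) ^ (-1/2 + 1 : ℝ) = 0 := Real.zero_rpow (by norm_num)
        rw [this]
        have ht' : (0:ℝ) ≤ t ^ (-1/2 + 1 : ℝ) := Real.rpow_nonneg ht.1.le _
        apply mul_nonneg hc₃.le
        apply div_nonneg (by simpa using ht')
        norm_num
    have hval : (∫ s in (0:ℝ)..t, c₃ * s ^ (-1/2 : ℝ)) = 2 * c₃ * Real.sqrt t := by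
      rw [intervalIntegral.integral_const_mul, integral_rpow (Or.inl (by norm_num)),
        Real.zero_rpow (by norm_num : (-1/2 + 1 : ℝ) ≠ 0)]
      rw [Real.sqrt_eq_rpow]
      norm_num
      ring
    calc (∫ s in (0:ℝ)..t, F s) ≤ _ := key
      _ = _ := hval
  · have : Tendsto (fun t : ℝ => 2 * c₃ * Real.sqrt t) (nhds 0) (nhds (2 * c₃ * Real.sqrt 0)) :=
      (continuous_const.mul Real.continuous_sqrt).tendsto 0
    simpa using this.mono_left nhdsWithin_le_nhds
end
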